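/- Let 0 < d < n and let Γ ⊂ ℝⁿ be d-Ahlfors regular with constant A. Let ϖ > 0. Then there exist constants c₁, c₂ > 0 depending only on A, d, n and ϖ such that for every ξ ∈ Γ and every R with 0 < R < ∞, c₁·R^{d+ϖ} ≤ ∫_{B(ξ,R)} dist(y,Γ)^{d−n+ϖ} dy ≤ c₂·R^{d+ϖ}, where the integral is with respect to n-dimensional Lebesgue measure. -/

import Mathlib

open MeasureTheory Metric Set Filter
open scoped ENNReal NNReal Topology RealInnerProductSpace

noncomputable section

namespace Paper

/-- Euclidean space `ℝⁿ`. -/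
abbrev Euc (n : ℕ) : Type := EuclideanSpace ℝ (Fin n)

variable {n : ℕ}

/-- `δ(x)`: the distance from `x` to the boundary of `Ω`. -/
def bd (Ω : Set (Euc n)) (x : Euc n) : ℝ := Metric.infDist x (frontier Ω)

/-- `σ`: the `d`-dimensional Hausdorff measure on `ℝⁿ`. -/
def hm (n : ℕ) (d : ℝ) : Measure (Euc n) := μH[d]

/-- `Γ ⊆ ℝⁿ` is `d`-Ahlfors regular with constant `A`:
`(1/A) rᵈ ≤ σ(B(ξ,r) ∩ Γ) ≤ A rᵈ` for all `ξ ∈ Γ` and `0 < r ≤ diam Γ`. -/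
def AhlforsRegular (d A : ℝ) (Γ : Set (Euc n)) : Prop :=
  Γ.Nonempty ∧ 0 < A ∧
    ∀ ξ ∈ Γ, ∀ r : ℝ, 0 < r → ENNReal.ofReal r ≤ EMetric.diam Γ →
      ENNReal.ofReal (r ^ d / A) ≤ hm n d (Metric.ball ξ r ∩ Γ) ∧
        hm n d (Metric.ball ξ r ∩ Γ) ≤ ENNReal.ofReal (A * r ^ d)

/-- A `λ`-carrot path from `x ∈ ∂Ω` to `y ∈ Ω`: a rectifiable curve, parameterized by
arc length (hence `1`-Lipschitz), from `x` to `y`, staying in `Ω ∪ {x}`, with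
`δ(ζ(t)) ≥ λ t`. -/
def IsCarrotPath (Ω : Set (Euc n)) (lam : ℝ) (x y : Euc n) : Prop :=
  ∃ (T : ℝ) (ζ : ℝ → Euc n), 0 ≤ T ∧ ζ 0 = x ∧ ζ T = y ∧
    LipschitzOnWith 1 ζ (Set.Icc 0 T) ∧
    (∀ t ∈ Set.Icc (0 : ℝ) T, ζ t ∈ Ω ∪ {x}) ∧
    (∀ t ∈ Set.Icc (0 : ℝ) T, lam * t ≤ bd Ω (ζ t))

/-- `y ∈ Ω` is a `(θ,λ,N)`-weak local John point. -/
def IsWLJPoint (Ω : Set (Euc n)) (d θ lam N : ℝ) (y : Euc n) : Prop :=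
  ∃ F : Set (Euc n), MeasurableSet F ∧
    F ⊆ Metric.ball y (N * bd Ω y) ∩ frontier Ω ∧
    ENNReal.ofReal θ * hm n d (Metric.ball y (N * bd Ω y) ∩ frontier Ω) ≤ hm n d F ∧
    ∀ x ∈ F, IsCarrotPath Ω lam x y

/-- The weak local John condition with specified parameters. -/
def WeakLocalJohnWith (Ω : Set (Euc n)) (d θ lam N : ℝ) : Prop :=
  0 < θ ∧ θ ≤ 1 ∧ 0 < lam ∧ lam ≤ 1 ∧ 2 ≤ N ∧ ∀ y ∈ Ω, IsWLJPoint Ω d θ lam N y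

/-- `Ω` is a weak local John domain. -/
def WeakLocalJohn (Ω : Set (Euc n)) (d : ℝ) : Prop :=
  ∃ θ lam N : ℝ, WeakLocalJohnWith Ω d θ lam N

/-- The interior corkscrew condition. -/
def InteriorCorkscrew (Ω : Set (Euc n)) : Prop :=
  ∃ ε : ℝ, 0 < ε ∧ ε < 1 ∧ ∀ x ∈ frontier Ω, ∀ r : ℝ, 0 < r →
    ENNReal.ofReal r < EMetric.diam Ω →
    ∃ z : Euc n, z ∈ Metric.ball x r ∧ Metric.ball z (ε * r) ⊆ Ω

/-- The Harnack chain condition. -/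
def HarnackChainCond (Ω : Set (Euc n)) : Prop :=
  ∃ (M m : ℝ) (Nf : ℝ → ℕ), 1 ≤ M ∧ 0 < m ∧ m < 1 ∧
    ∀ x ∈ Ω, ∀ y ∈ Ω,
      ∃ (N : ℕ) (c : Fin (N + 1) → Euc n) (r : Fin (N + 1) → ℝ),
        N ≤ Nf (dist x y / min (bd Ω x) (bd Ω y)) ∧
        x ∈ Metric.ball (c 0) (r 0) ∧ y ∈ Metric.ball (c (Fin.last N)) (r (Fin.last N)) ∧
        (∀ i : Fin N,
          (Metric.ball (c i.castSucc) (r i.castSucc) ∩ Metric.ball (c i.succ) (r i.succ)).Nonempty) ∧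
        ∀ i : Fin (N + 1), 0 < r i ∧ Metric.ball (c i) (r i) ⊆ Ω ∧
          m * (2 * r i) ≤ bd Ω (c i) - r i ∧ bd Ω (c i) - r i ≤ M * (2 * r i)

/-- The weighted ellipticity conditions
`λ δ(x)^{d+1-n} |ξ|² ≤ ξ·A(x)ξ` and `|η·A(x)ξ| ≤ Λ δ(x)^{d+1-n} |ξ||η|` on `Ω`. -/
def WeaklyElliptic (Ω : Set (Euc n)) (d lam Lam : ℝ)
    (A : Euc n → Euc n →L[ℝ] Euc n) : Prop :=
  0 < lam ∧ lam ≤ Lam ∧ (∀ v : Euc n, Measurable fun x => A x v) ∧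
    ∀ x ∈ Ω, ∀ ξ η : Euc n,
      lam * bd Ω x ^ (d + 1 - (n : ℝ)) * ‖ξ‖ ^ 2 ≤ ⟪ξ, A x ξ⟫ ∧
      |⟪η, A x ξ⟫| ≤ Lam * bd Ω x ^ (d + 1 - (n : ℝ)) * ‖ξ‖ * ‖η‖

/-- A test function on the open set `Ψ`: smooth, compactly supported, support inside `Ψ`. -/
def IsTestOn (Ψ : Set (Euc n)) (φ : Euc n → ℝ) : Prop :=
  ContDiff ℝ (⊤ : ℕ∞) φ ∧ HasCompactSupport φ ∧ tsupport φ ⊆ Ψ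

/-- `g` is the weak gradient of `u` on `Ψ`:
`∫_Ψ u ∂ᵥφ = −∫_Ψ ⟪g,v⟫ φ` for all test functions `φ` and directions `v`. -/
def HasWeakGradOn (u : Euc n → ℝ) (g : Euc n → Euc n) (Ψ : Set (Euc n)) : Prop :=
  LocallyIntegrableOn u Ψ volume ∧ LocallyIntegrableOn g Ψ volume ∧
    ∀ φ : Euc n → ℝ, IsTestOn Ψ φ → ∀ v : Euc n,
      (∫ x in Ψ, u x * fderiv ℝ φ x v) = -∫ x in Ψ, ⟪g x, v⟫ * φ x

/-- Weak formulation of `− div A ∇u = − div H` in `Ψ`, where `g` is the weak gradient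
of `u`. -/
def WeakSolOn (Ψ : Set (Euc n)) (A : Euc n → Euc n →L[ℝ] Euc n)
    (u : Euc n → ℝ) (g H : Euc n → Euc n) : Prop :=
  HasWeakGradOn u g Ψ ∧ LocallyIntegrableOn H Ψ volume ∧
    ∀ φ : Euc n → ℝ, IsTestOn Ψ φ →
      (∫ x in Ψ, ⟪gradient φ x, A x (g x)⟫) = ∫ x in Ψ, ⟪gradient φ x, H x⟫

/-- `Tr u(ξ) = 0` in the averaged sense: `r^{-n} ∫_{B(ξ,r)∩Ω} |u| → 0` as `r → 0⁺`. -/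
def TrZeroAt (Ω : Set (Euc n)) (u : Euc n → ℝ) (ξ : Euc n) : Prop :=
  Tendsto (fun r : ℝ => (1 / r ^ n) * ∫ x in Metric.ball ξ r ∩ Ω, |u x|)
    (𝓝[>] 0) (𝓝 0)

/-- The Whitney average `W_{c,β} f (y) = (⨍_{B(y, c δ(y))} |f|^β)^{1/β}`
(essential supremum if `β = ∞`), as an extended nonnegative real. -/
def wAvg (Ω : Set (Euc n)) (c : ℝ) (β : ℝ≥0∞) {F : Type*} [NormedAddCommGroup F]
    (f : Euc n → F) (y : Euc n) : ℝ≥0∞ :=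
  eLpNorm f β
    ((volume (Metric.ball y (c * bd Ω y)))⁻¹ • volume.restrict (Metric.ball y (c * bd Ω y)))

/-- The weighted averaged norm `‖f‖_{L^p_{av,c,β,s}(Ψ;Ω)}`:
`(∫_Ψ (W_{c,β}f)^p δ^{d-n+p-ps})^{1/p}`, `sup_Ψ (W_{c,β}f) δ^{1-s}` if `p = ∞`. -/
def avNormOn (Ω Ψ : Set (Euc n)) (d c : ℝ) (β p : ℝ≥0∞) (s : ℝ)
    {F : Type*} [NormedAddCommGroup F] (f : Euc n → F) : ℝ≥0∞ :=
  if p = ⊤ then ⨆ y ∈ Ψ, wAvg Ω c β f y * ENNReal.ofReal (bd Ω y) ^ (1 - s)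
  else (∫⁻ y in Ψ, wAvg Ω c β f y ^ p.toReal *
      ENNReal.ofReal (bd Ω y) ^ (d - n + p.toReal - p.toReal * s)) ^ (1 / p.toReal)

/-- The weighted averaged norm `‖f‖_{L^p_{av,c,β,s}(Ω)}`. -/
def avNorm (Ω : Set (Euc n)) (d c : ℝ) (β p : ℝ≥0∞) (s : ℝ)
    {F : Type*} [NormedAddCommGroup F] (f : Euc n → F) : ℝ≥0∞ :=
  avNormOn Ω Ω d c β p s f

/-- `f ∈ L^β_loc(Ω)`. -/
def MemLLoc (Ω : Set (Euc n)) (β : ℝ≥0∞) {F : Type*} [NormedAddCommGroup F]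
    (f : Euc n → F) : Prop :=
  AEStronglyMeasurable f (volume.restrict Ω) ∧
    ∀ K : Set (Euc n), K ⊆ Ω → IsCompact K → eLpNorm f β (volume.restrict K) < ⊤

/-- The nontangential cone `γ_a(ξ) = {x ∈ Ω : |x − ξ| < (1+a) δ(x)}`. -/
def ntCone (Ω : Set (Euc n)) (a : ℝ) (ξ : Euc n) : Set (Euc n) :=
  {x | x ∈ Ω ∧ dist x ξ < (1 + a) * bd Ω x}

/-- The nontangential maximal function `N_a f (ξ) = esssup_{γ_a(ξ)} |f|`. -/
def ntMax (Ω : Set (Euc n)) (a : ℝ) {F : Type*} [NormedAddCommGroup F]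
    (f : Euc n → F) (ξ : Euc n) : ℝ≥0∞ :=
  essSup (fun x => (‖f x‖₊ : ℝ≥0∞)) (volume.restrict (ntCone Ω a ξ))

/-- The `L^q` norm of an `ℝ≥0∞`-valued function. -/
def lqNormE (q : ℝ≥0∞) {α : Type*} [MeasurableSpace α] (μ : Measure α)
    (f : α → ℝ≥0∞) : ℝ≥0∞ :=
  if q = ⊤ then essSup f μ else (∫⁻ x, f x ^ q.toReal ∂μ) ^ (1 / q.toReal)

/-- `Tr_{a,c} u (x) = U`: `x` is in the closure of its nontangential cone, and the
Whitney averages of `|u − U|` tend to `0` nontangentially. -/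
def HasNTTrace (Ω : Set (Euc n)) (a c : ℝ) (u : Euc n → ℝ) (x : Euc n) (U : ℝ) : Prop :=
  x ∈ closure (ntCone Ω a x) ∧
    Tendsto (fun y => wAvg Ω c 1 (fun z => u z - U) y) (𝓝[ntCone Ω a x] x) (𝓝 0)


/-- volume of unit ball -/
def ubv (n : ℕ) : ℝ≥0∞ := volume (ball (0 : Euc n) 1)

lemma ubv_pos : 0 < ubv n := measure_ball_pos _ _ one_pos
lemma ubv_lt_top : ubv n < ⊤ := measure_ball_lt_top
lemma ubv_toReal_pos : 0 < (ubv n).toReal :=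
  ENNReal.toReal_pos ubv_pos.ne' ubv_lt_top.ne

lemma nontrivial_euc (hn : 0 < n) : Nontrivial (Euc n) := by
  apply Module.nontrivial_of_finrank_pos (R := ℝ) (M := Euc n)
  simpa using hn

lemma vol_ball (hn : 0 < n) (x : Euc n) {r : ℝ} (hr : 0 ≤ r) :
    volume (ball x r) = ENNReal.ofReal (r ^ n) * ubv n := by
  haveI := nontrivial_euc hn
  rw [Measure.addHaar_ball volume x hr, finrank_euclideanSpace_fin]; rfl

/-- Cardinality bound for separated sets in a ball, by volume counting. -/
lemma card_sep (hn : 0 < n) {x₀ : Euc n} {r t : ℝ} (ht : 0 < t) (hr : 0 ≤ r)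
    (S : Finset (Euc n)) (hSb : ∀ s ∈ S, s ∈ closedBall x₀ r)
    (hsep : ∀ a ∈ S, ∀ b ∈ S, a ≠ b → t ≤ dist a b) :
    (S.card : ℝ) * (t / 2) ^ n ≤ (r + t / 2) ^ n := by
  have ht2 : (0:ℝ) < t / 2 := by linarith
  have hdisj : (↑S : Set (Euc n)).PairwiseDisjoint (fun s => ball s (t / 2)) := by
    intro a ha b hb hab
    refine Set.disjoint_left.2 fun z hza hzb => ?_
    have := hsep a ha b hb hab
    have : dist a b < t := by
      calc dist a b ≤ dist a z + dist z b := dist_triangle _ _ _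
        _ < t / 2 + t / 2 := by
            rw [mem_ball] at hza hzb
            rw [dist_comm a z]; linarith
        _ = t := by ring
    linarith [hsep a ha b hb hab]
  have hsub : (⋃ s ∈ S, ball s (t / 2)) ⊆ ball x₀ (r + t / 2) := by
    intro z hz
    simp only [mem_iUnion] at hz
    obtain ⟨s, hs, hzs⟩ := hz
    have h1 : dist s x₀ ≤ r := hSb s hs
    rw [mem_ball] at hzs ⊢
    calc dist z x₀ ≤ dist z s + dist s x₀ := dist_triangle _ _ _
      _ < t / 2 + r := by linarith
      _ = r + t / 2 := by ring
  have hsum : (S.card : ℝ≥0∞) * (ENNReal.ofReal ((t / 2) ^ n) * ubv n)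
      ≤ ENNReal.ofReal ((r + t / 2) ^ n) * ubv n := by
    calc (S.card : ℝ≥0∞) * (ENNReal.ofReal ((t / 2) ^ n) * ubv n)
        = ∑ s ∈ S, volume (ball s (t / 2)) := by
          rw [Finset.sum_congr rfl fun s _ => vol_ball hn s ht2.le]
          simp [Finset.sum_const, mul_comm]
      _ = volume (⋃ s ∈ S, ball s (t / 2)) :=
          (measure_biUnion_finset hdisj fun s _ => measurableSet_ball).symm
      _ ≤ volume (ball x₀ (r + t / 2)) := measure_mono hsub
      _ = ENNReal.ofReal ((r + t / 2) ^ n) * ubv n := vol_ball hn x₀ (by linarith)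
  have hcan : (S.card : ℝ≥0∞) * ENNReal.ofReal ((t / 2) ^ n)
      ≤ ENNReal.ofReal ((r + t / 2) ^ n) := by
    rw [← mul_assoc] at hsum
    exact (ENNReal.mul_le_mul_iff_left ubv_pos.ne' ubv_lt_top.ne).1 hsum
  -- convert to real
  have h1 : ENNReal.ofReal ((S.card : ℝ) * (t / 2) ^ n) ≤ ENNReal.ofReal ((r + t / 2) ^ n) := by
    rw [ENNReal.ofReal_mul (by positivity)]
    simpa [ENNReal.ofReal_natCast] using hcan
  have h2 := (ENNReal.ofReal_le_ofReal_iff (by positivity)).1 h1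
  exact h2

/-- Existence of a maximal `t`-separated net in a bounded set. -/
lemma exists_net (hn : 0 < n) {x₀ : Euc n} {r t : ℝ} (ht : 0 < t) (hr : 0 ≤ r)
    {E : Set (Euc n)} (hE : E ⊆ closedBall x₀ r) :
    ∃ S : Finset (Euc n), ↑S ⊆ E ∧ (∀ a ∈ S, ∀ b ∈ S, a ≠ b → t ≤ dist a b) ∧
      ∀ z ∈ E, ∃ s ∈ S, dist z s < t := by
  classical
  set P : Finset (Euc n) → Prop := fun S => ↑S ⊆ E ∧ ∀ a ∈ S, ∀ b ∈ S, a ≠ b → t ≤ dist a b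
  have hP0 : P ∅ := ⟨by simp, by simp⟩
  -- uniform bound on cardinalities
  obtain ⟨M, hM⟩ : ∃ M : ℕ, ∀ S : Finset (Euc n), P S → S.card ≤ M := by
    refine ⟨⌈(r + t / 2) ^ n / (t / 2) ^ n⌉₊, fun S hS => ?_⟩
    have h := card_sep hn ht hr S (fun s hs => hE (hS.1 hs)) hS.2
    have ht2 : (0:ℝ) < (t / 2) ^ n := by positivity
    have : (S.card : ℝ) ≤ (r + t / 2) ^ n / (t / 2) ^ n := by
      rw [le_div_iff₀ ht2]; exact h
    exact_mod_cast this.trans (Nat.le_ceil _)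
  have hbdd : BddAbove {k | ∃ S : Finset (Euc n), P S ∧ S.card = k} :=
    ⟨M, fun k ⟨S, hS, hc⟩ => hc ▸ hM S hS⟩
  have hne : {k | ∃ S : Finset (Euc n), P S ∧ S.card = k}.Nonempty := ⟨0, ∅, hP0, rfl⟩
  obtain ⟨S, hS, hcard⟩ := Nat.sSup_mem hne hbdd
  refine ⟨S, hS.1, hS.2, fun z hz => ?_⟩
  by_contra hcon
  push_neg at hcon
  have hzS : z ∉ S := fun h => absurd (hcon z h) (by simpa using ht)
  have hP' : P (insert z S) := by
    constructor
    · intro a ha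
      rcases Finset.mem_insert.1 (by exact_mod_cast ha) with h | h
      · exact h ▸ hz
      · exact hS.1 h
    · intro a ha b hb hab
      rcases Finset.mem_insert.1 ha with h1 | h1 <;> rcases Finset.mem_insert.1 hb with h2 | h2
      · exact absurd (h1.trans h2.symm) hab
      · rw [h1]; exact hcon b h2
      · rw [h2, dist_comm]; exact hcon a h1
      · exact hS.2 a h1 b h2 hab
  have : (insert z S).card ≤ sSup {k | ∃ S : Finset (Euc n), P S ∧ S.card = k} :=
    le_csSup hbdd ⟨insert z S, hP', rfl⟩
  rw [Finset.card_insert_of_notMem hzS, hcard] at this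
  omega


/-- Global upper mass bound: `σ(Γ ∩ B(ξ,r)) ≤ 9^n A r^d` for all `r > 0`. -/
lemma hm_ball_le (hn : 0 < n) {d A : ℝ} (hd0 : 0 < d) (hA : 1 ≤ A) {Γ : Set (Euc n)}
    (reg : AhlforsRegular d A Γ) {ξ : Euc n} (hξ : ξ ∈ Γ) {r : ℝ} (hr : 0 < r) :
    hm n d (Γ ∩ ball ξ r) ≤ ENNReal.ofReal ((9:ℝ) ^ n * (A * r ^ d)) := by
  have hArd : 0 ≤ A * r ^ d := by positivity
  have h9 : (1:ℝ) ≤ (9:ℝ) ^ n := one_le_pow₀ (by norm_num)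
  by_cases hcase : ENNReal.ofReal r ≤ EMetric.diam Γ
  · have h := (reg.2.2 ξ hξ r hr hcase).2
    calc hm n d (Γ ∩ ball ξ r) = hm n d (ball ξ r ∩ Γ) := by rw [inter_comm]
      _ ≤ ENNReal.ofReal (A * r ^ d) := h
      _ ≤ ENNReal.ofReal ((9:ℝ) ^ n * (A * r ^ d)) :=
          ENNReal.ofReal_le_ofReal (le_mul_of_one_le_left hArd h9)
  · push_neg at hcase
    by_cases hsing : EMetric.diam Γ = 0
    · have hsub : Γ.Subsingleton := EMetric.diam_eq_zero_iff.1 hsing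
      haveI : NullSingletonClass (hm n d) := MeasureTheory.Measure.noAtoms_hausdorff (Euc n) hd0
      have h1 : hm n d (Γ ∩ ball ξ r) ≤ hm n d {ξ} :=
        measure_mono fun z hz => by simpa using hsub hz.1 hξ
      rw [measure_singleton] at h1
      exact h1.trans zero_le
    · have htop : EMetric.diam Γ ≠ ⊤ := hcase.ne_top
      set D : ℝ := Metric.diam Γ with hDdef
      have hD : 0 < D := ENNReal.toReal_pos hsing htop
      have hDr : D ≤ r := ENNReal.toReal_le_of_le_ofReal hr.le hcase.le
      have hbd : Bornology.IsBounded Γ := Metric.isBounded_iff_ediam_ne_top.2 htop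
      have hΓsub : Γ ⊆ closedBall ξ D := fun z hz =>
        mem_closedBall.2 (Metric.dist_le_diam_of_mem hbd hz hξ)
      obtain ⟨S, hSE, hSsep, hSnet⟩ := exists_net (x₀ := ξ) (r := D) hn
        (t := D / 4) (by positivity) hD.le subset_rfl
      -- card bound
      have hcard : (S.card : ℝ) ≤ (9:ℝ) ^ n := by
        have h := card_sep hn (x₀ := ξ) (r := D) (t := D / 4) (by positivity) hD.le S
          (fun s hs => hSE hs) hSsep
        have h8 : (0:ℝ) < (D / 4 / 2) ^ n := by positivity
        have heq : (D + D / 4 / 2) ^ n = (9:ℝ) ^ n * (D / 4 / 2) ^ n := by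
          rw [← mul_pow]; ring_nf
        rw [heq] at h
        exact le_of_mul_le_mul_right (by linarith [h]) h8
      -- covering bound
      have hcover : Γ ∩ ball ξ r ⊆ ⋃ s ∈ S, ball s (D / 4) ∩ Γ := by
        rintro z ⟨hzΓ, -⟩
        obtain ⟨s, hs, hzs⟩ := hSnet z (hΓsub hzΓ)
        exact mem_biUnion hs ⟨mem_ball.2 hzs, hzΓ⟩
      have hperball : ∀ s ∈ S, hm n d (ball s (D / 4) ∩ Γ) ≤ ENNReal.ofReal (A * (D / 2) ^ d) := by
        intro s hs
        rcases (ball s (D / 4) ∩ Γ).eq_empty_or_nonempty with he | ⟨γ, hγb, hγΓ⟩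
        · rw [he]; simp
        · have hsub2 : ball s (D / 4) ∩ Γ ⊆ ball γ (D / 2) ∩ Γ := by
            rintro z ⟨hzb, hzΓ⟩
            refine ⟨mem_ball.2 ?_, hzΓ⟩
            have h1 : dist z s < D / 4 := mem_ball.1 hzb
            have h2 : dist γ s < D / 4 := mem_ball.1 hγb
            calc dist z γ ≤ dist z s + dist s γ := dist_triangle _ _ _
              _ < D / 4 + D / 4 := by rw [dist_comm s γ]; linarith
              _ = D / 2 := by ring
          have hdiam2 : ENNReal.ofReal (D / 2) ≤ EMetric.diam Γ := by
            rw [← ENNReal.ofReal_toReal htop]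
            have hDeq : (EMetric.diam Γ).toReal = D := rfl
            exact ENNReal.ofReal_le_ofReal (by rw [hDeq]; linarith)
          have := (reg.2.2 γ hγΓ (D / 2) (by linarith) hdiam2).2
          exact (measure_mono hsub2).trans this
      calc hm n d (Γ ∩ ball ξ r) ≤ hm n d (⋃ s ∈ S, ball s (D / 4) ∩ Γ) := measure_mono hcover
        _ ≤ ∑ s ∈ S, hm n d (ball s (D / 4) ∩ Γ) := measure_biUnion_finset_le _ _
        _ ≤ ∑ _s ∈ S, ENNReal.ofReal (A * (D / 2) ^ d) := Finset.sum_le_sum hperball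
        _ = (S.card : ℝ≥0∞) * ENNReal.ofReal (A * (D / 2) ^ d) := by
            rw [Finset.sum_const, nsmul_eq_mul]
        _ ≤ ENNReal.ofReal ((9:ℝ) ^ n) * ENNReal.ofReal (A * (D / 2) ^ d) := by
            gcongr
            rw [← ENNReal.ofReal_natCast]
            exact ENNReal.ofReal_le_ofReal hcard
        _ = ENNReal.ofReal ((9:ℝ) ^ n * (A * (D / 2) ^ d)) := by
            rw [← ENNReal.ofReal_mul (by positivity)]
        _ ≤ ENNReal.ofReal ((9:ℝ) ^ n * (A * r ^ d)) := by
            apply ENNReal.ofReal_le_ofReal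
            have : (D / 2) ^ d ≤ r ^ d :=
              Real.rpow_le_rpow (by linarith) (by linarith) hd0.le
            have h1 : A * (D / 2) ^ d ≤ A * r ^ d :=
              mul_le_mul_of_nonneg_left this (by linarith)
            exact mul_le_mul_of_nonneg_left h1 (by positivity)



/-- Superadditivity over disjoint measurable pieces, for arbitrary `Γ`. -/
lemma sum_measure_inter_le {α ι : Type*} [MeasurableSpace α] (μ : Measure α)
    (S : Finset ι) (B : ι → Set α) (hmeas : ∀ i ∈ S, MeasurableSet (B i))
    (hdisj : ∀ i ∈ S, ∀ j ∈ S, i ≠ j → Disjoint (B i) (B j)) (Γ : Set α) :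
    ∑ i ∈ S, μ (B i ∩ Γ) ≤ μ ((⋃ i ∈ S, B i) ∩ Γ) := by
  classical
  induction S using Finset.induction_on with
  | empty => simp
  | @insert a s ha ih =>
    rw [Finset.sum_insert ha]
    set X : Set α := (⋃ i ∈ insert a s, B i) ∩ Γ with hX
    have hBa : MeasurableSet (B a) := hmeas a (Finset.mem_insert_self a s)
    have hkey : μ (X ∩ B a) + μ (X \ B a) = μ X := measure_inter_add_diff X hBa
    have h1 : μ (B a ∩ Γ) ≤ μ (X ∩ B a) := by
      apply measure_mono
      rintro z ⟨hzB, hzΓ⟩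
      exact ⟨⟨mem_biUnion (Finset.mem_insert_self a s) hzB, hzΓ⟩, hzB⟩
    have h2 : μ ((⋃ i ∈ s, B i) ∩ Γ) ≤ μ (X \ B a) := by
      apply measure_mono
      rintro z ⟨hzU, hzΓ⟩
      simp only [mem_iUnion] at hzU
      obtain ⟨i, hi, hzi⟩ := hzU
      refine ⟨⟨mem_biUnion (Finset.mem_insert_of_mem hi) hzi, hzΓ⟩, ?_⟩
      intro hzBa
      have hne : i ≠ a := fun h => ha (h ▸ hi)
      exact Set.disjoint_left.1
        (hdisj i (Finset.mem_insert_of_mem hi) a (Finset.mem_insert_self a s) hne) hzi hzBa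
    have h3 := ih (fun i hi => hmeas i (Finset.mem_insert_of_mem hi))
      (fun i hi j hj hij => hdisj i (Finset.mem_insert_of_mem hi) j (Finset.mem_insert_of_mem hj) hij)
    calc μ (B a ∩ Γ) + ∑ i ∈ s, μ (B i ∩ Γ) ≤ μ (X ∩ B a) + μ (X \ B a) :=
          add_le_add h1 (h3.trans h2)
      _ = μ X := hkey

/-- The constant for the neighborhood-volume bound. -/
def CB (n : ℕ) (d A : ℝ) : ℝ :=
  (ubv n).toReal * 2 ^ n * (1 + 9 ^ n * A ^ 2 * (3:ℝ) ^ d * 2 ^ d)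

lemma CB_pos {d A : ℝ} (hA : 1 ≤ A) : 0 < CB n d A := by
  have h1 : (0:ℝ) < (ubv n).toReal := ubv_toReal_pos
  have h2 : (0:ℝ) < (3:ℝ) ^ d := Real.rpow_pos_of_pos (by norm_num) d
  have h3 : (0:ℝ) < (2:ℝ) ^ d := Real.rpow_pos_of_pos (by norm_num) d
  have h4 : (0:ℝ) < (9:ℝ) ^ n := by positivity
  have h5 : (0:ℝ) < (2:ℝ) ^ n := by positivity
  have h6 : (0:ℝ) ≤ 9 ^ n * A ^ 2 * (3:ℝ) ^ d * 2 ^ d :=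
    mul_nonneg (mul_nonneg (mul_nonneg h4.le (sq_nonneg A)) h2.le) h3.le
  have h7 : (0:ℝ) < 1 + 9 ^ n * A ^ 2 * (3:ℝ) ^ d * 2 ^ d := by linarith
  exact mul_pos (mul_pos h1 h5) h7

/-- Volume of the `t`-neighborhood of `Γ` inside `B(ξ,R)`. -/
lemma nbhd_vol (hn : 0 < n) {d A : ℝ} (hd0 : 0 < d) (hA : 1 ≤ A)
    {Γ : Set (Euc n)} (reg : AhlforsRegular d A Γ) {ξ : Euc n} (hξ : ξ ∈ Γ)
    {R t : ℝ} (hR : 0 < R) (ht : 0 < t) (htR : t ≤ R) :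
    volume {y ∈ ball ξ R | infDist y Γ < t}
      ≤ ENNReal.ofReal (CB n d A * (R ^ d * t ^ ((n:ℝ) - d))) := by
  have hA0 : (0:ℝ) < A := lt_of_lt_of_le one_pos hA
  obtain ⟨S, hSE, hSsep, hSnet⟩ := exists_net (x₀ := ξ) (r := 2 * R) hn ht (by linarith)
    (E := Γ ∩ closedBall ξ (2 * R)) inter_subset_right
  -- the neighborhood is covered by balls of radius 2t around the net
  have hsub : {y ∈ ball ξ R | infDist y Γ < t} ⊆ ⋃ s ∈ S, ball s (2 * t) := by
    rintro y ⟨hyb, hyd⟩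
    obtain ⟨z, hzΓ, hzd⟩ := (infDist_lt_iff reg.1).1 hyd
    have hzE : z ∈ Γ ∩ closedBall ξ (2 * R) := by
      refine ⟨hzΓ, mem_closedBall.2 ?_⟩
      have h1 : dist y ξ < R := mem_ball.1 hyb
      calc dist z ξ ≤ dist z y + dist y ξ := dist_triangle _ _ _
        _ ≤ t + R := by rw [dist_comm z y]; linarith
        _ ≤ 2 * R := by linarith
    obtain ⟨s, hs, hzs⟩ := hSnet z hzE
    refine mem_biUnion hs (mem_ball.2 ?_)
    calc dist y s ≤ dist y z + dist z s := dist_triangle _ _ _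
      _ < t + t := by linarith
      _ = 2 * t := by ring
  -- cardinality bound
  set K₁ : ℝ := 9 ^ n * A ^ 2 * (3:ℝ) ^ d * 2 ^ d with hK₁
  have hK₁0 : 0 < K₁ := by
    have h2 : (0:ℝ) < (3:ℝ) ^ d := Real.rpow_pos_of_pos (by norm_num) d
    have h3 : (0:ℝ) < (2:ℝ) ^ d := Real.rpow_pos_of_pos (by norm_num) d
    have h4 : (0:ℝ) < (9:ℝ) ^ n := by positivity
    positivity
  have htd : (0:ℝ) < t ^ d := Real.rpow_pos_of_pos ht d
  have hRd : (0:ℝ) < R ^ d := Real.rpow_pos_of_pos hR d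
  have hcard : (S.card : ℝ) * t ^ d ≤ (1 + K₁) * R ^ d := by
    by_cases hc1 : S.card ≤ 1
    · have : (S.card : ℝ) ≤ 1 := by exact_mod_cast hc1
      have htR' : t ^ d ≤ R ^ d := Real.rpow_le_rpow ht.le htR hd0.le
      nlinarith
    · push_neg at hc1
      obtain ⟨a, ha, b, hb, hab⟩ := Finset.one_lt_card.1 hc1
      have hdiam : ENNReal.ofReal t ≤ EMetric.diam Γ := by
        calc ENNReal.ofReal t ≤ ENNReal.ofReal (dist a b) :=
              ENNReal.ofReal_le_ofReal (hSsep a ha b hb hab)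
          _ = edist a b := (edist_dist a b).symm
          _ ≤ EMetric.diam Γ := EMetric.edist_le_diam_of_mem (hSE ha).1 (hSE hb).1
      have hdiam2 : ENNReal.ofReal (t / 2) ≤ EMetric.diam Γ :=
        le_trans (ENNReal.ofReal_le_ofReal (by linarith)) hdiam
      -- lower bound on the measure of disjoint balls
      have hdisj : (↑S : Set (Euc n)).PairwiseDisjoint (fun s => ball s (t / 2) ∩ Γ) := by
        intro a' ha' b' hb' hab'
        refine Set.disjoint_left.2 fun z hza hzb => ?_
        have h1 : dist z a' < t / 2 := mem_ball.1 hza.1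
        have h2 : dist z b' < t / 2 := mem_ball.1 hzb.1
        have h3 := hSsep a' ha' b' hb' hab'
        have : dist a' b' < t := by
          calc dist a' b' ≤ dist a' z + dist z b' := dist_triangle _ _ _
            _ < t / 2 + t / 2 := by rw [dist_comm a' z]; linarith
            _ = t := by ring
        linarith
      have hUsub : (⋃ s ∈ S, ball s (t / 2) ∩ Γ) ⊆ Γ ∩ ball ξ (3 * R) := by
        intro z hz
        simp only [mem_iUnion] at hz
        obtain ⟨s, hs, hzb, hzΓ⟩ := hz
        refine ⟨hzΓ, mem_ball.2 ?_⟩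
        have h1 : dist s ξ ≤ 2 * R := mem_closedBall.1 (hSE hs).2
        calc dist z ξ ≤ dist z s + dist s ξ := dist_triangle _ _ _
          _ < t / 2 + 2 * R := by linarith [mem_ball.1 hzb]
          _ ≤ 3 * R := by linarith
      have hlow : (S.card : ℝ≥0∞) * ENNReal.ofReal ((t / 2) ^ d / A)
          ≤ ENNReal.ofReal ((9:ℝ) ^ n * (A * (3 * R) ^ d)) := by
        calc (S.card : ℝ≥0∞) * ENNReal.ofReal ((t / 2) ^ d / A)
            = ∑ s ∈ S, ENNReal.ofReal ((t / 2) ^ d / A) := by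
              rw [Finset.sum_const, nsmul_eq_mul]
          _ ≤ ∑ s ∈ S, hm n d (ball s (t / 2) ∩ Γ) := by
              refine Finset.sum_le_sum fun s hs => ?_
              exact (reg.2.2 s (hSE hs).1 (t / 2) (by linarith) hdiam2).1
          _ ≤ hm n d ((⋃ s ∈ S, ball s (t / 2)) ∩ Γ) := by
              refine sum_measure_inter_le (hm n d) S (fun s => ball s (t / 2))
                (fun s _ => measurableSet_ball) (fun a' ha' b' hb' hab' => ?_) Γ
              refine Set.disjoint_left.2 fun z hza hzb => ?_
              have h1 : dist z a' < t / 2 := mem_ball.1 hza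
              have h2 : dist z b' < t / 2 := mem_ball.1 hzb
              have h3 := hSsep a' ha' b' hb' hab'
              have : dist a' b' < t := by
                calc dist a' b' ≤ dist a' z + dist z b' := dist_triangle _ _ _
                  _ < t / 2 + t / 2 := by rw [dist_comm a' z]; linarith
                  _ = t := by ring
              linarith
          _ ≤ hm n d (Γ ∩ ball ξ (3 * R)) := by
              refine measure_mono ?_
              rintro z ⟨hzU, hzΓ⟩
              obtain ⟨s, hs, hzb⟩ := mem_iUnion₂.1 hzU
              exact hUsub (mem_biUnion hs ⟨hzb, hzΓ⟩)
          _ ≤ ENNReal.ofReal ((9:ℝ) ^ n * (A * (3 * R) ^ d)) :=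
              hm_ball_le hn hd0 hA reg hξ (by linarith)
      -- convert to a real inequality
      have h2d : (0:ℝ) < (2:ℝ) ^ d := Real.rpow_pos_of_pos (by norm_num) d
      have h3d : (0:ℝ) < (3:ℝ) ^ d := Real.rpow_pos_of_pos (by norm_num) d
      have h9n : (0:ℝ) < (9:ℝ) ^ n := by positivity
      have hreal : (S.card : ℝ) * ((t / 2) ^ d / A) ≤ (9:ℝ) ^ n * (A * (3 * R) ^ d) := by
        have h' : ENNReal.ofReal ((S.card : ℝ) * ((t / 2) ^ d / A))
            ≤ ENNReal.ofReal ((9:ℝ) ^ n * (A * (3 * R) ^ d)) := by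
          rw [ENNReal.ofReal_mul (by positivity), ENNReal.ofReal_natCast]
          exact hlow
        exact (ENNReal.ofReal_le_ofReal_iff (by positivity)).1 h'
      have hrw : (S.card : ℝ) * ((t / 2) ^ d / A) = (S.card : ℝ) * t ^ d / (2 ^ d * A) := by
        rw [Real.div_rpow ht.le (by norm_num)]; ring
      rw [hrw, div_le_iff₀ (by positivity)] at hreal
      have h3Rd : (3 * R) ^ d = (3:ℝ) ^ d * R ^ d := Real.mul_rpow (by norm_num) hR.le
      calc (S.card : ℝ) * t ^ d ≤ 9 ^ n * (A * (3 * R) ^ d) * (2 ^ d * A) := hreal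
        _ = K₁ * R ^ d := by rw [h3Rd, hK₁]; ring
        _ ≤ (1 + K₁) * R ^ d := by nlinarith
  -- assemble the volume bound
  have htnd : (0:ℝ) < t ^ ((n:ℝ) - d) := Real.rpow_pos_of_pos ht _
  have hsplit : (t:ℝ) ^ (n:ℕ) = t ^ d * t ^ ((n:ℝ) - d) := by
    rw [← Real.rpow_natCast t n, ← Real.rpow_add ht]; ring_nf
  have hw : ubv n = ENNReal.ofReal (ubv n).toReal := (ENNReal.ofReal_toReal ubv_lt_top.ne).symm
  calc volume {y ∈ ball ξ R | infDist y Γ < t}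
      ≤ volume (⋃ s ∈ S, ball s (2 * t)) := measure_mono hsub
    _ ≤ ∑ s ∈ S, volume (ball s (2 * t)) := measure_biUnion_finset_le _ _
    _ = (S.card : ℝ≥0∞) * (ENNReal.ofReal ((2 * t) ^ n) * ubv n) := by
        rw [Finset.sum_congr rfl fun s _ => vol_ball hn s (by linarith), Finset.sum_const,
          nsmul_eq_mul]
    _ = ENNReal.ofReal ((S.card : ℝ) * (2 * t) ^ n) * ubv n := by
        rw [ENNReal.ofReal_mul (by positivity), ENNReal.ofReal_natCast, mul_assoc]
    _ ≤ ENNReal.ofReal ((1 + K₁) * R ^ d * (2 ^ n * t ^ ((n:ℝ) - d))) * ubv n := by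
        refine mul_le_mul_left (ENNReal.ofReal_le_ofReal ?_) _
        have : ((2:ℝ) * t) ^ n = 2 ^ n * (t ^ d * t ^ ((n:ℝ) - d)) := by
          rw [mul_pow, hsplit]
        rw [this]
        calc (S.card : ℝ) * ((2:ℝ) ^ n * (t ^ d * t ^ ((n:ℝ) - d)))
            = ((S.card : ℝ) * t ^ d) * (2 ^ n * t ^ ((n:ℝ) - d)) := by ring
          _ ≤ ((1 + K₁) * R ^ d) * (2 ^ n * t ^ ((n:ℝ) - d)) := by
              apply mul_le_mul_of_nonneg_right hcard (by positivity)
          _ = (1 + K₁) * R ^ d * (2 ^ n * t ^ ((n:ℝ) - d)) := by ring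
    _ = ENNReal.ofReal (CB n d A * (R ^ d * t ^ ((n:ℝ) - d))) := by
        rw [hw, ← ENNReal.ofReal_mul (by positivity)]
        congr 1
        rw [CB, hK₁]; ring


/-- The closure of `Γ` (points at zero distance) is Lebesgue-null inside any ball. -/
lemma vol_zero_dist (hn : 0 < n) {d A : ℝ} (hd0 : 0 < d) (hdn : d < (n:ℝ)) (hA : 1 ≤ A)
    {Γ : Set (Euc n)} (reg : AhlforsRegular d A Γ) {ξ : Euc n} (hξ : ξ ∈ Γ)
    {R : ℝ} (hR : 0 < R) :
    volume {y ∈ ball ξ R | infDist y Γ = 0} = 0 := by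
  have hC : 0 < CB n d A := CB_pos hA
  have hRd : (0:ℝ) < R ^ d := Real.rpow_pos_of_pos hR d
  have hnd : (0:ℝ) < (n:ℝ) - d := by linarith
  set c := volume {y ∈ ball ξ R | infDist y Γ = 0} with hc
  have hbound : ∀ t : ℝ, 0 < t → t ≤ R →
      c ≤ ENNReal.ofReal (CB n d A * (R ^ d * t ^ ((n:ℝ) - d))) := by
    intro t ht htR
    refine le_trans (measure_mono ?_) (nbhd_vol hn hd0 hA reg hξ hR ht htR)
    rintro y ⟨hyb, hyd⟩
    exact ⟨hyb, by rw [hyd]; exact ht⟩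
  by_contra hne
  have hfin : c < ⊤ :=
    lt_of_le_of_lt (hbound R hR le_rfl) ENNReal.ofReal_lt_top
  have hcr : 0 < c.toReal := ENNReal.toReal_pos hne hfin.ne
  set cr := c.toReal with hcrdef
  set t₀ : ℝ := min R ((cr / (2 * CB n d A * R ^ d)) ^ (1 / ((n:ℝ) - d))) with ht₀
  have hbase : 0 < cr / (2 * CB n d A * R ^ d) := by positivity
  have ht₀pos : 0 < t₀ := lt_min hR (Real.rpow_pos_of_pos hbase _)
  have ht₀R : t₀ ≤ R := min_le_left _ _
  have h1 := hbound t₀ ht₀pos ht₀R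
  have h2 : cr ≤ CB n d A * (R ^ d * t₀ ^ ((n:ℝ) - d)) :=
    ENNReal.toReal_le_of_le_ofReal (by positivity) h1
  have h3 : t₀ ^ ((n:ℝ) - d) ≤ cr / (2 * CB n d A * R ^ d) := by
    calc t₀ ^ ((n:ℝ) - d)
        ≤ ((cr / (2 * CB n d A * R ^ d)) ^ (1 / ((n:ℝ) - d))) ^ ((n:ℝ) - d) :=
          Real.rpow_le_rpow ht₀pos.le (min_le_right _ _) hnd.le
      _ = cr / (2 * CB n d A * R ^ d) := by
          rw [one_div]
          exact Real.rpow_inv_rpow hbase.le hnd.ne'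
  have h4 : CB n d A * (R ^ d * t₀ ^ ((n:ℝ) - d)) ≤ cr / 2 := by
    have := mul_le_mul_of_nonneg_left h3 (by positivity : (0:ℝ) ≤ CB n d A * R ^ d)
    calc CB n d A * (R ^ d * t₀ ^ ((n:ℝ) - d))
        = CB n d A * R ^ d * t₀ ^ ((n:ℝ) - d) := by ring
      _ ≤ CB n d A * R ^ d * (cr / (2 * CB n d A * R ^ d)) := this
      _ = cr / 2 := by field_simp
  linarith

/-- The corkscrew-type constant. -/
def eps (n : ℕ) (d A : ℝ) : ℝ :=
  min (1 / 4) (((ubv n).toReal / (2 ^ (n + 1) * CB n d A)) ^ (1 / ((n:ℝ) - d)))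

lemma eps_pos {d A : ℝ} (hA : 1 ≤ A) : 0 < eps n d A := by
  have hC : 0 < CB n d A := CB_pos hA
  have hw : 0 < (ubv n).toReal := ubv_toReal_pos
  exact lt_min (by norm_num) (Real.rpow_pos_of_pos (by positivity) _)

lemma eps_le {d A : ℝ} : eps n d A ≤ 1 / 4 := min_le_left _ _

/-- There is a point of `B(ξ, R/2)` at distance `≥ ε R` from `Γ`. -/
lemma far_point (hn : 0 < n) {d A : ℝ} (hd0 : 0 < d) (hdn : d < (n:ℝ)) (hA : 1 ≤ A)
    {Γ : Set (Euc n)} (reg : AhlforsRegular d A Γ) {ξ : Euc n} (hξ : ξ ∈ Γ)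
    {R : ℝ} (hR : 0 < R) :
    ∃ y : Euc n, dist y ξ ≤ R / 2 ∧ eps n d A * R ≤ infDist y Γ := by
  set ε := eps n d A with hεdef
  have hε : 0 < ε := eps_pos hA
  have hε4 : ε ≤ 1 / 4 := eps_le
  have hC : 0 < CB n d A := CB_pos hA
  have hw : 0 < (ubv n).toReal := ubv_toReal_pos
  have hnd : (0:ℝ) < (n:ℝ) - d := by linarith
  by_contra hcon
  push_neg at hcon
  have hsub : ball ξ (R / 2) ⊆ {y ∈ ball ξ R | infDist y Γ < ε * R} := by
    intro y hy
    have h1 : dist y ξ < R / 2 := mem_ball.1 hy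
    exact ⟨mem_ball.2 (by linarith), hcon y (by linarith)⟩
  have h1 : volume (ball ξ (R / 2)) ≤
      ENNReal.ofReal (CB n d A * (R ^ d * (ε * R) ^ ((n:ℝ) - d))) :=
    le_trans (measure_mono hsub)
      (nbhd_vol hn hd0 hA reg hξ hR (by positivity) (by nlinarith))
  rw [vol_ball hn ξ (by linarith)] at h1
  have hwr : ubv n = ENNReal.ofReal (ubv n).toReal := (ENNReal.ofReal_toReal ubv_lt_top.ne).symm
  rw [hwr, ← ENNReal.ofReal_mul (by positivity)] at h1
  have h2 : (R / 2) ^ n * (ubv n).toReal ≤ CB n d A * (R ^ d * (ε * R) ^ ((n:ℝ) - d)) :=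
    (ENNReal.ofReal_le_ofReal_iff (by positivity)).1 h1
  -- rewrite both sides
  have hRn : (R:ℝ) ^ (n:ℕ) = R ^ d * R ^ ((n:ℝ) - d) := by
    rw [← Real.rpow_natCast R n, ← Real.rpow_add hR]; ring_nf
  have hεR : (ε * R) ^ ((n:ℝ) - d) = ε ^ ((n:ℝ) - d) * R ^ ((n:ℝ) - d) :=
    Real.mul_rpow hε.le hR.le
  have hεnd : ε ^ ((n:ℝ) - d) ≤ (ubv n).toReal / (2 ^ (n + 1) * CB n d A) := by
    calc ε ^ ((n:ℝ) - d)
        ≤ (((ubv n).toReal / (2 ^ (n + 1) * CB n d A)) ^ (1 / ((n:ℝ) - d))) ^ ((n:ℝ) - d) :=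
          Real.rpow_le_rpow hε.le (min_le_right _ _) hnd.le
      _ = (ubv n).toReal / (2 ^ (n + 1) * CB n d A) := by
          rw [one_div]
          exact Real.rpow_inv_rpow (by positivity) hnd.ne'
  have hRd : (0:ℝ) < R ^ d := Real.rpow_pos_of_pos hR d
  have hRnd : (0:ℝ) < R ^ ((n:ℝ) - d) := Real.rpow_pos_of_pos hR _
  have h3 : CB n d A * (R ^ d * (ε * R) ^ ((n:ℝ) - d))
      ≤ (ubv n).toReal / 2 ^ (n + 1) * (R ^ d * R ^ ((n:ℝ) - d)) := by
    rw [hεR]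
    have := mul_le_mul_of_nonneg_left hεnd (le_of_lt hC)
    calc CB n d A * (R ^ d * (ε ^ ((n:ℝ) - d) * R ^ ((n:ℝ) - d)))
        = (CB n d A * ε ^ ((n:ℝ) - d)) * (R ^ d * R ^ ((n:ℝ) - d)) := by ring
      _ ≤ (CB n d A * ((ubv n).toReal / (2 ^ (n + 1) * CB n d A))) * (R ^ d * R ^ ((n:ℝ) - d)) := by
          apply mul_le_mul_of_nonneg_right this (by positivity)
      _ = (ubv n).toReal / 2 ^ (n + 1) * (R ^ d * R ^ ((n:ℝ) - d)) := by
          field_simp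
  -- contradiction: (R/2)^n w ≤ w/2^{n+1} R^n
  have h4 : (R / 2) ^ n * (ubv n).toReal ≤ (ubv n).toReal / 2 ^ (n + 1) * (R ^ (n:ℕ)) := by
    rw [hRn]; linarith
  have h5 : (R / 2) ^ n = R ^ (n:ℕ) / 2 ^ n := div_pow R 2 n
  have hR2 : (0:ℝ) < R ^ (n:ℕ) := by positivity
  have h6 : (0:ℝ) < 2 ^ n := by positivity
  rw [h5] at h4
  have h7 : (2:ℝ) ^ (n + 1) = 2 * 2 ^ n := by ring
  have h8 : R ^ (n:ℕ) * (ubv n).toReal / 2 ^ n ≤ R ^ (n:ℕ) * (ubv n).toReal / (2 * 2 ^ n) := by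
    calc R ^ (n:ℕ) * (ubv n).toReal / 2 ^ n = R ^ (n:ℕ) / 2 ^ n * (ubv n).toReal := by ring
      _ ≤ (ubv n).toReal / 2 ^ (n + 1) * R ^ (n:ℕ) := h4
      _ = R ^ (n:ℕ) * (ubv n).toReal / (2 * 2 ^ n) := by rw [h7]; ring
  have h9 : R ^ (n:ℕ) * (ubv n).toReal / (2 * 2 ^ n) < R ^ (n:ℕ) * (ubv n).toReal / 2 ^ n :=
    div_lt_div_of_pos_left (mul_pos hR2 hw) h6 (by linarith)
  linarith


lemma rpow_le_rpow_of_nonpos' {x y : ℝ≥0∞} (h : x ≤ y) {z : ℝ} (hz : z ≤ 0) :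
    y ^ z ≤ x ^ z := by
  rw [← neg_neg z, ENNReal.rpow_neg y, ENNReal.rpow_neg x]
  exact ENNReal.inv_le_inv.2 (ENNReal.rpow_le_rpow h (neg_nonneg.2 hz))

lemma regular_mono {d A₀ : ℝ} {Γ : Set (Euc n)} (reg : AhlforsRegular d A₀ Γ) :
    AhlforsRegular d (max A₀ 1) Γ := by
  obtain ⟨hne, hA0, h⟩ := reg
  refine ⟨hne, lt_of_lt_of_le one_pos (le_max_right _ _), fun ξ hξ r hr hrd => ?_⟩
  obtain ⟨h1, h2⟩ := h ξ hξ r hr hrd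
  have hrd0 : (0:ℝ) ≤ r ^ d := Real.rpow_nonneg hr.le d
  constructor
  · refine le_trans (ENNReal.ofReal_le_ofReal ?_) h1
    exact div_le_div_of_nonneg_left hrd0 hA0 (le_max_left _ _)
  · exact h2.trans (ENNReal.ofReal_le_ofReal
      (mul_le_mul_of_nonneg_right (le_max_left _ _) hrd0))

/-- lower-bound constant -/
def c1 (n : ℕ) (d A ϖ : ℝ) : ℝ :=
  min (ubv n).toReal ((ubv n).toReal * (eps n d A / 2) ^ (d + ϖ))

/-- upper-bound constant -/
def c2 (n : ℕ) (d A ϖ : ℝ) : ℝ :=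
  (ubv n).toReal + CB n d A * 2 ^ n * (1 - (2:ℝ) ^ (-ϖ))⁻¹

lemma c1_pos {d A ϖ : ℝ} (hA : 1 ≤ A) (hdϖ : 0 < d + ϖ) : 0 < c1 n d A ϖ := by
  have hw : 0 < (ubv n).toReal := ubv_toReal_pos
  have hε : 0 < eps n d A := eps_pos hA
  exact lt_min hw (mul_pos hw (Real.rpow_pos_of_pos (by linarith) _))

lemma q_lt_one {ϖ : ℝ} (hϖ : 0 < ϖ) : (2:ℝ) ^ (-ϖ) < 1 := by
  rw [← Real.rpow_zero 2]
  exact Real.rpow_lt_rpow_of_exponent_lt (by norm_num) (by linarith)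

lemma q_pos {ϖ : ℝ} : (0:ℝ) < (2:ℝ) ^ (-ϖ) := Real.rpow_pos_of_pos (by norm_num) _

lemma c2_pos {d A ϖ : ℝ} (hA : 1 ≤ A) (hϖ : 0 < ϖ) : 0 < c2 n d A ϖ := by
  have hw : 0 < (ubv n).toReal := ubv_toReal_pos
  have hC : 0 < CB n d A := CB_pos hA
  have h1 : 0 < 1 - (2:ℝ) ^ (-ϖ) := by linarith [q_lt_one hϖ]
  have h2 : (0:ℝ) < 2 ^ n := by positivity
  have : 0 < CB n d A * 2 ^ n * (1 - (2:ℝ) ^ (-ϖ))⁻¹ := by positivity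
  unfold c2; linarith

/-- Lower bound. -/
lemma lower_bound (hn : 0 < n) {d A ϖ : ℝ} (hd0 : 0 < d) (hdn : d < (n:ℝ)) (hϖ : 0 < ϖ)
    (hA : 1 ≤ A) {Γ : Set (Euc n)} (reg : AhlforsRegular d A Γ) {ξ : Euc n} (hξ : ξ ∈ Γ)
    {R : ℝ} (hR : 0 < R) :
    ENNReal.ofReal (c1 n d A ϖ * R ^ (d + ϖ)) ≤
      ∫⁻ y in ball ξ R, ENNReal.ofReal (infDist y Γ) ^ (d - (n:ℝ) + ϖ) := by
  set α : ℝ := d - (n:ℝ) + ϖ with hα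
  have hw : 0 < (ubv n).toReal := ubv_toReal_pos
  have hwr : ubv n = ENNReal.ofReal (ubv n).toReal := (ENNReal.ofReal_toReal ubv_lt_top.ne).symm
  have hdϖ : 0 < d + ϖ := by linarith
  have hRdϖ : 0 < R ^ (d + ϖ) := Real.rpow_pos_of_pos hR _
  have hRn : (R:ℝ) ^ (n:ℕ) * R ^ α = R ^ (d + ϖ) := by
    rw [← Real.rpow_natCast R n, ← Real.rpow_add hR]
    congr 1
    rw [hα]; ring
  rcases le_or_gt α 0 with hαle | hαpos
  · have key : ∀ y ∈ ball ξ R, ENNReal.ofReal R ^ α ≤ ENNReal.ofReal (infDist y Γ) ^ α :=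
      fun y hy => rpow_le_rpow_of_nonpos'
        (ENNReal.ofReal_le_ofReal ((infDist_le_dist_of_mem hξ).trans (mem_ball.1 hy).le)) hαle
    calc ENNReal.ofReal (c1 n d A ϖ * R ^ (d + ϖ))
        ≤ ENNReal.ofReal ((ubv n).toReal * R ^ (d + ϖ)) :=
          ENNReal.ofReal_le_ofReal
            (mul_le_mul_of_nonneg_right (min_le_left _ _) hRdϖ.le)
      _ = ENNReal.ofReal R ^ α * volume (ball ξ R) := by
          rw [vol_ball hn ξ hR.le, ENNReal.ofReal_rpow_of_pos hR, hwr,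
            ← ENNReal.ofReal_mul (by positivity), ← ENNReal.ofReal_mul (by positivity)]
          congr 1
          rw [ENNReal.toReal_ofReal hw.le, ← hRn]; ring
      _ = ∫⁻ _ in ball ξ R, ENNReal.ofReal R ^ α := (setLIntegral_const _ _).symm
      _ ≤ ∫⁻ y in ball ξ R, ENNReal.ofReal (infDist y Γ) ^ α :=
          setLIntegral_mono' measurableSet_ball key
  · obtain ⟨y, hy1, hy2⟩ := far_point hn hd0 hdn hA reg hξ hR
    set ε := eps n d A with hεdef
    have hε : 0 < ε := eps_pos hA
    have hε4 : ε ≤ 1 / 4 := eps_le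
    have hball : ball y (ε * R / 2) ⊆ ball ξ R := by
      intro z hz
      have h1 : dist z y < ε * R / 2 := mem_ball.1 hz
      have : dist z ξ ≤ dist z y + dist y ξ := dist_triangle _ _ _
      refine mem_ball.2 (by nlinarith)
    have key : ∀ z ∈ ball y (ε * R / 2),
        ENNReal.ofReal (ε * R / 2) ^ α ≤ ENNReal.ofReal (infDist z Γ) ^ α := by
      intro z hz
      have h1 : dist z y < ε * R / 2 := mem_ball.1 hz
      have h2 : infDist y Γ ≤ infDist z Γ + dist y z := infDist_le_infDist_add_dist
      have h3 : ε * R / 2 ≤ infDist z Γ := by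
        rw [dist_comm y z] at h2; linarith
      exact ENNReal.rpow_le_rpow (ENNReal.ofReal_le_ofReal h3) hαpos.le
    have hεR2 : 0 < ε * R / 2 := by positivity
    calc ENNReal.ofReal (c1 n d A ϖ * R ^ (d + ϖ))
        ≤ ENNReal.ofReal ((ubv n).toReal * (ε / 2) ^ (d + ϖ) * R ^ (d + ϖ)) :=
          ENNReal.ofReal_le_ofReal
            (mul_le_mul_of_nonneg_right (min_le_right _ _) hRdϖ.le)
      _ = ENNReal.ofReal (ε * R / 2) ^ α * volume (ball y (ε * R / 2)) := by
          rw [vol_ball hn y hεR2.le, ENNReal.ofReal_rpow_of_pos hεR2, hwr,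
            ← ENNReal.ofReal_mul (by positivity), ← ENNReal.ofReal_mul (by positivity)]
          congr 1
          rw [ENNReal.toReal_ofReal hw.le]
          have e1 : (ε * R / 2) ^ (n:ℕ) * (ε * R / 2) ^ α = (ε * R / 2) ^ (d + ϖ) := by
            rw [← Real.rpow_natCast (ε * R / 2) n, ← Real.rpow_add hεR2]
            congr 1
            rw [hα]; ring
          have e2 : (ε * R / 2) ^ (d + ϖ) = (ε / 2) ^ (d + ϖ) * R ^ (d + ϖ) := by
            rw [← Real.mul_rpow (by positivity) hR.le]
            congr 1
            ring
          calc (ubv n).toReal * (ε / 2) ^ (d + ϖ) * R ^ (d + ϖ)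
              = ((ε / 2) ^ (d + ϖ) * R ^ (d + ϖ)) * (ubv n).toReal := by ring
            _ = (ε * R / 2) ^ (d + ϖ) * (ubv n).toReal := by rw [e2]
            _ = (ε * R / 2) ^ α * ((ε * R / 2) ^ (n:ℕ) * (ubv n).toReal) := by
                rw [← e1]; ring
      _ = ∫⁻ _ in ball y (ε * R / 2), ENNReal.ofReal (ε * R / 2) ^ α :=
          (setLIntegral_const _ _).symm
      _ ≤ ∫⁻ z in ball y (ε * R / 2), ENNReal.ofReal (infDist z Γ) ^ α :=
          setLIntegral_mono' measurableSet_ball key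
      _ ≤ ∫⁻ z in ball ξ R, ENNReal.ofReal (infDist z Γ) ^ α :=
          lintegral_mono_set hball


lemma two_npow_rpow (k : ℕ) (z : ℝ) : (((2:ℝ) ^ k) : ℝ) ^ z = (2:ℝ) ^ ((k:ℝ) * z) := by
  rw [← Real.rpow_natCast 2 k, ← Real.rpow_mul (by norm_num)]

/-- Upper bound. -/
lemma upper_bound (hn : 0 < n) {d A ϖ : ℝ} (hd0 : 0 < d) (hdn : d < (n:ℝ)) (hϖ : 0 < ϖ)
    (hA : 1 ≤ A) {Γ : Set (Euc n)} (reg : AhlforsRegular d A Γ) {ξ : Euc n} (hξ : ξ ∈ Γ)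
    {R : ℝ} (hR : 0 < R) :
    (∫⁻ y in ball ξ R, ENNReal.ofReal (infDist y Γ) ^ (d - (n:ℝ) + ϖ)) ≤
      ENNReal.ofReal (c2 n d A ϖ * R ^ (d + ϖ)) := by
  set α : ℝ := d - (n:ℝ) + ϖ with hα
  have hw : 0 < (ubv n).toReal := ubv_toReal_pos
  have hwr : ubv n = ENNReal.ofReal (ubv n).toReal := (ENNReal.ofReal_toReal ubv_lt_top.ne).symm
  have hC : 0 < CB n d A := CB_pos hA
  have hdϖ : 0 < d + ϖ := by linarith
  have hRdϖ : 0 < R ^ (d + ϖ) := Real.rpow_pos_of_pos hR _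
  have hq1 : (2:ℝ) ^ (-ϖ) < 1 := q_lt_one hϖ
  have hq0 : (0:ℝ) < (2:ℝ) ^ (-ϖ) := q_pos
  set q : ℝ := (2:ℝ) ^ (-ϖ) with hqdef
  have hc2w : (ubv n).toReal ≤ c2 n d A ϖ := by
    have h1 : 0 < 1 - q := by linarith
    have h2 : (0:ℝ) < 2 ^ n := by positivity
    have : 0 < CB n d A * 2 ^ n * (1 - q)⁻¹ := by positivity
    unfold c2; linarith
  have hRn : (R:ℝ) ^ (n:ℕ) * R ^ α = R ^ (d + ϖ) := by
    rw [← Real.rpow_natCast R n, ← Real.rpow_add hR]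
    congr 1
    rw [hα]; ring
  rcases le_or_gt 0 α with hαpos | hαneg
  · -- easy case: bounded integrand
    have key : ∀ y ∈ ball ξ R, ENNReal.ofReal (infDist y Γ) ^ α ≤ ENNReal.ofReal R ^ α :=
      fun y hy => ENNReal.rpow_le_rpow
        (ENNReal.ofReal_le_ofReal ((infDist_le_dist_of_mem hξ).trans (mem_ball.1 hy).le)) hαpos
    calc (∫⁻ y in ball ξ R, ENNReal.ofReal (infDist y Γ) ^ α)
        ≤ ∫⁻ _ in ball ξ R, ENNReal.ofReal R ^ α := setLIntegral_mono' measurableSet_ball key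
      _ = ENNReal.ofReal R ^ α * volume (ball ξ R) := setLIntegral_const _ _
      _ = ENNReal.ofReal ((ubv n).toReal * R ^ (d + ϖ)) := by
          rw [vol_ball hn ξ hR.le, ENNReal.ofReal_rpow_of_pos hR, hwr,
            ← ENNReal.ofReal_mul (by positivity), ← ENNReal.ofReal_mul (by positivity)]
          congr 1
          rw [ENNReal.toReal_ofReal hw.le, ← hRn]; ring
      _ ≤ ENNReal.ofReal (c2 n d A ϖ * R ^ (d + ϖ)) :=
          ENNReal.ofReal_le_ofReal (mul_le_mul_of_nonneg_right hc2w hRdϖ.le)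
  · -- hard case: dyadic shells
    set N : Set (Euc n) := {y ∈ ball ξ R | infDist y Γ = 0} with hN
    set Sk : ℕ → Set (Euc n) := fun k =>
      ball ξ R ∩ (fun y => infDist y Γ) ⁻¹' (Set.Ico (R / 2 ^ (k + 1)) (R / 2 ^ k)) with hSk
    have hSkmeas : ∀ k, MeasurableSet (Sk k) := fun k =>
      measurableSet_ball.inter ((continuous_infDist_pt Γ).measurable measurableSet_Ico)
    have hcover : ball ξ R ⊆ N ∪ ⋃ k, Sk k := by
      intro y hy
      rcases eq_or_lt_of_le (infDist_nonneg (x := y) (s := Γ)) with h0 | hpos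
      · exact Or.inl ⟨hy, h0.symm⟩
      · refine Or.inr (mem_iUnion.2 ?_)
        have hex : ∃ k : ℕ, R / 2 ^ (k + 1) ≤ infDist y Γ := by
          obtain ⟨k, hk⟩ := pow_unbounded_of_one_lt (R / infDist y Γ) (by norm_num : (1:ℝ) < 2)
          refine ⟨k, ?_⟩
          rw [div_le_iff₀ (by positivity)]
          rw [div_lt_iff₀ hpos] at hk
          have : (2:ℝ) ^ k ≤ 2 ^ (k + 1) := by
            apply pow_le_pow_right₀ (by norm_num); omega
          nlinarith [infDist_nonneg (x := y) (s := Γ)]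
        refine ⟨Nat.find hex, hy, Nat.find_spec hex, ?_⟩
        rcases Nat.eq_zero_or_pos (Nat.find hex) with h0' | hpos'
        · rw [h0']
          simp only [pow_zero, div_one]
          exact lt_of_le_of_lt (infDist_le_dist_of_mem hξ) (mem_ball.1 hy)
        · obtain ⟨m, hm⟩ := Nat.exists_eq_succ_of_ne_zero hpos'.ne'
          have := Nat.find_min hex (m := m) (by omega)
          rw [hm]
          push_neg at this
          exact this
    have hNzero : volume N = 0 := vol_zero_dist hn hd0 hdn hA reg hξ hR
    -- per-shell bound
    have hshell : ∀ k : ℕ, (∫⁻ y in Sk k, ENNReal.ofReal (infDist y Γ) ^ α)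
        ≤ ENNReal.ofReal (CB n d A * 2 ^ n * R ^ (d + ϖ)) * ENNReal.ofReal q ^ k := by
      intro k
      have h2k : (0:ℝ) < 2 ^ k := by positivity
      have h2k1 : (0:ℝ) < 2 ^ (k + 1) := by positivity
      have hRk : (0:ℝ) < R / 2 ^ k := by positivity
      have hRk1 : (0:ℝ) < R / 2 ^ (k + 1) := by positivity
      have key : ∀ y ∈ Sk k, ENNReal.ofReal (infDist y Γ) ^ α
          ≤ ENNReal.ofReal (R / 2 ^ (k + 1)) ^ α := by
        rintro y ⟨-, hy2⟩
        exact rpow_le_rpow_of_nonpos' (ENNReal.ofReal_le_ofReal hy2.1) hαneg.le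
      have hvol : volume (Sk k) ≤ ENNReal.ofReal (CB n d A * (R ^ d * (R / 2 ^ k) ^ ((n:ℝ) - d))) := by
        refine le_trans (measure_mono ?_) (nbhd_vol hn hd0 hA reg hξ hR hRk ?_)
        · rintro y ⟨hy1, hy2⟩
          exact ⟨hy1, hy2.2⟩
        · rw [div_le_iff₀ h2k]
          have h1 : (1:ℝ) ≤ 2 ^ k := one_le_pow₀ (by norm_num)
          nlinarith
      have hterm : (R / 2 ^ (k + 1)) ^ α * (CB n d A * (R ^ d * (R / 2 ^ k) ^ ((n:ℝ) - d)))
          ≤ CB n d A * 2 ^ n * R ^ (d + ϖ) * q ^ k := by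
        have e1 : (R / 2 ^ (k + 1)) ^ α = R ^ α / (2:ℝ) ^ (((k:ℝ) + 1) * α) := by
          rw [Real.div_rpow hR.le h2k1.le, two_npow_rpow (k + 1) α]
          push_cast
          ring_nf
        have e2 : (R / 2 ^ k) ^ ((n:ℝ) - d) = R ^ ((n:ℝ) - d) / (2:ℝ) ^ ((k:ℝ) * ((n:ℝ) - d)) := by
          rw [Real.div_rpow hR.le h2k.le, two_npow_rpow k ((n:ℝ) - d)]
        have e3 : R ^ α * (R ^ d * R ^ ((n:ℝ) - d)) = R ^ (d + ϖ) := by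
          rw [← Real.rpow_add hR, ← Real.rpow_add hR]
          congr 1
          rw [hα]; ring
        set X : ℝ := (2:ℝ) ^ (((k:ℝ) + 1) * α) with hX
        set Y : ℝ := (2:ℝ) ^ ((k:ℝ) * ((n:ℝ) - d)) with hY
        have hXpos : 0 < X := Real.rpow_pos_of_pos (by norm_num) _
        have hYpos : 0 < Y := Real.rpow_pos_of_pos (by norm_num) _
        have e4 : X * Y = (2:ℝ) ^ (α + (k:ℝ) * ϖ) := by
          rw [hX, hY, ← Real.rpow_add (by norm_num : (0:ℝ) < 2)]
          congr 1
          rw [hα]; ring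
        have e6 : (X * Y)⁻¹ = (2:ℝ) ^ (-α) * q ^ k := by
          rw [e4, ← Real.rpow_neg (by norm_num : (0:ℝ) ≤ 2)]
          rw [hqdef, ← Real.rpow_natCast ((2:ℝ) ^ (-ϖ)) k, ← Real.rpow_mul (by norm_num),
            ← Real.rpow_add (by norm_num : (0:ℝ) < 2)]
          congr 1
          ring
        have h2n : (2:ℝ) ^ (-α) ≤ (2:ℝ) ^ (n:ℕ) := by
          rw [← Real.rpow_natCast 2 n]
          apply Real.rpow_le_rpow_of_exponent_le (by norm_num)
          rw [hα]; linarith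
        have hqk : (0:ℝ) < q ^ k := by positivity
        rw [e1, e2]
        have lhs_eq : R ^ α / X * (CB n d A * (R ^ d * (R ^ ((n:ℝ) - d) / Y)))
            = CB n d A * R ^ (d + ϖ) * ((2:ℝ) ^ (-α) * q ^ k) := by
          rw [← e3, ← e6]
          field_simp
        rw [lhs_eq]
        have hfin : CB n d A * R ^ (d + ϖ) * ((2:ℝ) ^ (-α) * q ^ k)
            ≤ CB n d A * R ^ (d + ϖ) * ((2:ℝ) ^ (n:ℕ) * q ^ k) := by
          apply mul_le_mul_of_nonneg_left _ (by positivity)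
          exact mul_le_mul_of_nonneg_right h2n hqk.le
        calc CB n d A * R ^ (d + ϖ) * ((2:ℝ) ^ (-α) * q ^ k)
            ≤ CB n d A * R ^ (d + ϖ) * ((2:ℝ) ^ (n:ℕ) * q ^ k) := hfin
          _ = CB n d A * 2 ^ n * R ^ (d + ϖ) * q ^ k := by ring
      calc (∫⁻ y in Sk k, ENNReal.ofReal (infDist y Γ) ^ α)
          ≤ ∫⁻ _ in Sk k, ENNReal.ofReal (R / 2 ^ (k + 1)) ^ α :=
            setLIntegral_mono' (hSkmeas k) key
        _ = ENNReal.ofReal (R / 2 ^ (k + 1)) ^ α * volume (Sk k) := setLIntegral_const _ _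
        _ ≤ ENNReal.ofReal (R / 2 ^ (k + 1)) ^ α
              * ENNReal.ofReal (CB n d A * (R ^ d * (R / 2 ^ k) ^ ((n:ℝ) - d))) :=
            mul_le_mul_right hvol _
        _ = ENNReal.ofReal ((R / 2 ^ (k + 1)) ^ α * (CB n d A * (R ^ d * (R / 2 ^ k) ^ ((n:ℝ) - d)))) := by
            rw [ENNReal.ofReal_rpow_of_pos hRk1, ← ENNReal.ofReal_mul (by positivity)]
        _ ≤ ENNReal.ofReal (CB n d A * 2 ^ n * R ^ (d + ϖ) * q ^ k) :=
            ENNReal.ofReal_le_ofReal hterm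
        _ = ENNReal.ofReal (CB n d A * 2 ^ n * R ^ (d + ϖ)) * ENNReal.ofReal q ^ k := by
            rw [ENNReal.ofReal_mul (by positivity), ENNReal.ofReal_pow hq0.le]
    -- sum up
    have hgeo : ∑' k : ℕ, ENNReal.ofReal (CB n d A * 2 ^ n * R ^ (d + ϖ)) * ENNReal.ofReal q ^ k
        = ENNReal.ofReal (CB n d A * 2 ^ n * R ^ (d + ϖ)) * (1 - ENNReal.ofReal q)⁻¹ := by
      rw [ENNReal.tsum_mul_left, ENNReal.tsum_geometric]
    have hinv : (1 - ENNReal.ofReal q)⁻¹ = ENNReal.ofReal ((1 - q)⁻¹) := by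
      rw [← ENNReal.ofReal_one, ← ENNReal.ofReal_sub 1 hq0.le,
        ← ENNReal.ofReal_inv_of_pos (by linarith)]
    calc (∫⁻ y in ball ξ R, ENNReal.ofReal (infDist y Γ) ^ α)
        ≤ ∫⁻ y in N ∪ ⋃ k, Sk k, ENNReal.ofReal (infDist y Γ) ^ α := lintegral_mono_set hcover
      _ ≤ (∫⁻ y in N, ENNReal.ofReal (infDist y Γ) ^ α)
            + ∫⁻ y in ⋃ k, Sk k, ENNReal.ofReal (infDist y Γ) ^ α := lintegral_union_le _ _ _
      _ ≤ 0 + ∑' k : ℕ, ∫⁻ y in Sk k, ENNReal.ofReal (infDist y Γ) ^ α := by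
          gcongr
          · exact le_of_eq (setLIntegral_measure_zero _ _ hNzero)
          · exact lintegral_iUnion_le _ _
      _ ≤ ∑' k : ℕ, ENNReal.ofReal (CB n d A * 2 ^ n * R ^ (d + ϖ)) * ENNReal.ofReal q ^ k := by
          rw [zero_add]
          exact ENNReal.tsum_le_tsum hshell
      _ = ENNReal.ofReal (CB n d A * 2 ^ n * R ^ (d + ϖ)) * ENNReal.ofReal ((1 - q)⁻¹) := by
          rw [hgeo, hinv]
      _ = ENNReal.ofReal (CB n d A * 2 ^ n * (1 - q)⁻¹ * R ^ (d + ϖ)) := by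
          rw [← ENNReal.ofReal_mul (by positivity)]
          congr 1
          ring
      _ ≤ ENNReal.ofReal (c2 n d A ϖ * R ^ (d + ϖ)) := by
          apply ENNReal.ofReal_le_ofReal
          apply mul_le_mul_of_nonneg_right _ hRdϖ.le
          unfold c2
          linarith


/-- Lemma: weighted distance integral near an Ahlfors regular set.
If `Γ ⊂ ℝⁿ` is `d`-Ahlfors regular with constant `A₀` and `ϖ > 0`, then for every
`ξ ∈ Γ` and `0 < R < ∞`, `∫_{B(ξ,R)} dist(y,Γ)^{d-n+ϖ} dy ≈ R^{d+ϖ}`, with constants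
depending only on `A₀`, `d`, `n`, `ϖ`. -/
theorem statement_3 (n : ℕ) (d A₀ ϖ : ℝ) (hd0 : 0 < d) (hdn : d < n) (hϖ : 0 < ϖ) :
    ∃ c₁ c₂ : ℝ, 0 < c₁ ∧ 0 < c₂ ∧
      ∀ Γ : Set (Euc n), AhlforsRegular d A₀ Γ →
        ∀ ξ ∈ Γ, ∀ R : ℝ, 0 < R →
          ENNReal.ofReal (c₁ * R ^ (d + ϖ)) ≤
              (∫⁻ y in Metric.ball ξ R,
                ENNReal.ofReal (Metric.infDist y Γ) ^ (d - (n : ℝ) + ϖ)) ∧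
            (∫⁻ y in Metric.ball ξ R,
                ENNReal.ofReal (Metric.infDist y Γ) ^ (d - (n : ℝ) + ϖ)) ≤
              ENNReal.ofReal (c₂ * R ^ (d + ϖ)) := by
  set A : ℝ := max A₀ 1 with hAdef
  have hA : 1 ≤ A := le_max_right _ _
  have hn : 0 < n := by exact_mod_cast (hd0.trans hdn)
  have hdϖ : (0:ℝ) < d + ϖ := by linarith
  refine ⟨c1 n d A ϖ, c2 n d A ϖ, c1_pos hA hdϖ, c2_pos hA hϖ, ?_⟩
  intro Γ reg₀ ξ hξ R hR
  have reg : AhlforsRegular d A Γ := regular_mono reg₀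
  exact ⟨lower_bound hn hd0 hdn hϖ hA reg hξ hR,
    upper_bound hn hd0 hdn hϖ hA reg hξ hR⟩


end Paper
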